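/- Let x be a vertex of the path P_n (n ≥ 4) that is not the middle vertex of P5 (i.e., either n ≠ 5, or x is not the center). Then there exists a fixed-point-free permutation σ of V(P_n) such that: σ is a 2-placement of P_n; dist(σ(u),σ(v)) ≤ 5 for every edge uv; dist(x,σ(x)) = 1; and dist(y,σ(y)) ≤ 2 for every neighbor y of x and for every leaf y. -/
import Mathlib

open SimpleGraph

namespace Stmt8Aux

def pat (s g j : ℕ) : ℕ :=
  (if s = 4 then (if g = 0 ∨ g = 3 then [1,3,0,2] else [2,0,3,1])
   else if s = 5 then (if g = 1 ∨ g = 4 then [2,0,4,1,3] else [1,3,0,4,2])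
   else if s = 6 then
     (if g = 0 ∨ g = 5 then [1,3,0,5,2,4]
      else if g = 1 ∨ g = 2 then [2,0,3,5,1,4] else [1,4,0,2,5,3])
   else
     (if g = 0 ∨ g = 3 then [1,3,0,4,6,2,5]
      else if g = 1 ∨ g = 2 then [2,0,3,5,1,6,4]
      else if g = 4 then [2,0,5,1,3,6,4]
      else if g = 5 then [1,3,0,5,2,6,4] else [1,4,0,2,6,3,5])).getD j 0

set_option maxHeartbeats 4000000 in
set_option synthInstance.maxHeartbeats 2000000 in
set_option synthInstance.maxSize 2000 in
lemma pat_facts' : ∀ t < 4, ∀ g < t + 4, ∀ j < t + 4,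
    (pat (t+4) g j < t+4 ∧ pat (t+4) g j ≠ j) ∧
    (j + 1 < t+4 → pat (t+4) g (j+1) ≠ pat (t+4) g j + 1 ∧ pat (t+4) g j ≠ pat (t+4) g (j+1) + 1 ∧
      pat (t+4) g (j+1) ≤ pat (t+4) g j + 5 ∧ pat (t+4) g j ≤ pat (t+4) g (j+1) + 5) ∧
    ((j = 0 ∨ j + 1 = t+4 ∨ j + 1 = g ∨ j = g ∨ j = g + 1) →
      pat (t+4) g j ≤ j + 2 ∧ j ≤ pat (t+4) g j + 2) ∧
    ((t+4 = 5 → g ≠ 2) → j = g → (pat (t+4) g j = j + 1 ∨ j = pat (t+4) g j + 1)) := by decide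

lemma pat_facts (s : ℕ) (h8 : s < 8) (h4 : 4 ≤ s) : ∀ g < s, ∀ j < s,
    (pat s g j < s ∧ pat s g j ≠ j) ∧
    (j + 1 < s → pat s g (j+1) ≠ pat s g j + 1 ∧ pat s g j ≠ pat s g (j+1) + 1 ∧
      pat s g (j+1) ≤ pat s g j + 5 ∧ pat s g j ≤ pat s g (j+1) + 5) ∧
    ((j = 0 ∨ j + 1 = s ∨ j + 1 = g ∨ j = g ∨ j = g + 1) →
      pat s g j ≤ j + 2 ∧ j ≤ pat s g j + 2) ∧
    ((s = 5 → g ≠ 2) → j = g → (pat s g j = j + 1 ∨ j = pat s g j + 1)) := by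
  obtain ⟨t, rfl⟩ : ∃ t, s = t + 4 := ⟨s - 4, by omega⟩
  exact pat_facts' t (by omega)


set_option maxHeartbeats 4000000 in
set_option synthInstance.maxHeartbeats 2000000 in
set_option synthInstance.maxSize 2000 in
lemma pat_inj' : ∀ t < 4, ∀ g < t + 4, ∀ j < t + 4, ∀ k < t + 4,
    pat (t+4) g j = pat (t+4) g k → j = k := by decide

lemma pat_inj (s : ℕ) (h8 : s < 8) (h4 : 4 ≤ s) : ∀ g < s, ∀ j < s, ∀ k < s,
    pat s g j = pat s g k → j = k := by
  obtain ⟨t, rfl⟩ : ∃ t, s = t + 4 := ⟨s - 4, by omega⟩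
  exact pat_inj' t (by omega)


set_option maxHeartbeats 400000 in
lemma pat4_disp : ∀ g < 4, ∀ j < 4, pat 4 g j ≤ j + 2 ∧ j ≤ pat 4 g j + 2 := by decide

def BLK (t j : ℕ) : ℕ := j / 4 * 4 + pat 4 t (j % 4)

lemma blk_bounds (t : ℕ) (ht : t < 4) (j : ℕ) :
    j % 4 + BLK t j ≤ j + 3 ∧ j ≤ BLK t j + 2 ∧ BLK t j ≤ j + 2 ∧ BLK t j ≠ j := by
  have h1 := (pat_facts 4 (by norm_num) (by norm_num) t ht (j % 4) (by omega)).1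
  have h2 := pat4_disp t ht (j % 4) (by omega)
  unfold BLK; omega

lemma blk_edge (t : ℕ) (ht : t < 4) (j : ℕ) :
    BLK t (j+1) ≠ BLK t j + 1 ∧ BLK t j ≠ BLK t (j+1) + 1 ∧
    BLK t (j+1) ≤ BLK t j + 5 ∧ BLK t j ≤ BLK t (j+1) + 5 := by
  rcases Nat.lt_or_ge (j % 4) 3 with h | h
  · have e1 : (j+1) % 4 = j % 4 + 1 := by omega
    have e2 : (j+1) / 4 = j / 4 := by omega
    have h1 := (pat_facts 4 (by norm_num) (by norm_num) t ht (j % 4) (by omega)).2.1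
      (by omega)
    unfold BLK; rw [e1, e2]; omega
  · have h3 : j % 4 = 3 := by omega
    have e1 : (j+1) % 4 = 0 := by omega
    have e2 : (j+1) / 4 = j / 4 + 1 := by omega
    have f3 := pat_facts 4 (by norm_num) (by norm_num) t ht 3 (by norm_num)
    have f0 := pat_facts 4 (by norm_num) (by norm_num) t ht 0 (by norm_num)
    have g3 := f3.2.2.1 (by omega)
    have g0 := f0.2.2.1 (by omega)
    have := f3.1; have := f0.1
    unfold BLK; rw [h3, e1, e2]; omega

lemma blk_inj (t : ℕ) (ht : t < 4) (j k : ℕ) (h : BLK t j = BLK t k) : j = k := by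
  have pj := (pat_facts 4 (by norm_num) (by norm_num) t ht (j % 4) (by omega)).1.1
  have pk := (pat_facts 4 (by norm_num) (by norm_num) t ht (k % 4) (by omega)).1.1
  unfold BLK at h
  have := pat_inj 4 (by norm_num) (by norm_num) t ht (j % 4) (by omega) (k % 4) (by omega)
    (by omega)
  omega

lemma blk_good (t : ℕ) (ht : t < 4) (j : ℕ) (hj : j % 4 = t) :
    BLK t j = j + 1 ∨ j = BLK t j + 1 := by
  have hg := (pat_facts 4 (by norm_num) (by norm_num) t ht t ht).2.2.2
    (by omega) rfl
  have hpp : pat 4 t (j % 4) = pat 4 t t := by rw [hj]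
  unfold BLK; omega

def sz (n : ℕ) : ℕ := if n % 4 = 0 then 4 else 4 + n % 4
def aa (n x : ℕ) : ℕ := if sz n ≤ x then 0 else n - sz n
def gg (n x : ℕ) : ℕ :=
  if sz n ≤ x then 0 else if x < n - sz n then 0 else x - (n - sz n)
def tt (n x : ℕ) : ℕ := (if sz n ≤ x then x - sz n else x) % 4
def FF (n x i : ℕ) : ℕ :=
  if i < aa n x then BLK (tt n x) i
  else if i < aa n x + sz n then aa n x + pat (sz n) (gg n x) (i - aa n x)
  else aa n x + sz n + BLK (tt n x) (i - aa n x - sz n)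

lemma struct (n x : ℕ) (hn : 4 ≤ n) (hx : x < n) (h5 : n = 5 → x ≠ 2) :
    4 ≤ sz n ∧ sz n < 8 ∧ sz n ≤ n ∧ aa n x % 4 = 0 ∧ aa n x + sz n ≤ n ∧
    (n - (aa n x + sz n)) % 4 = 0 ∧ gg n x < sz n ∧ (sz n = 5 → gg n x ≠ 2) ∧
    tt n x < 4 ∧
    ((aa n x = 0 ∧ aa n x + sz n ≤ x ∧ (x - aa n x - sz n) % 4 = tt n x) ∨
     (x < aa n x ∧ x % 4 = tt n x) ∨
     (aa n x ≤ x ∧ x < aa n x + sz n ∧ x = aa n x + gg n x)) := by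
  unfold aa gg tt sz
  split_ifs <;> omega

lemma classify (n x : ℕ) (hn : 4 ≤ n) (hx : x < n) (h5 : n = 5 → x ≠ 2) :
    ∀ i < n,
    (i < aa n x ∧ FF n x i = BLK (tt n x) i ∧ FF n x i < aa n x) ∨
    (aa n x ≤ i ∧ i < aa n x + sz n ∧
      FF n x i = aa n x + pat (sz n) (gg n x) (i - aa n x) ∧
      aa n x ≤ FF n x i ∧ FF n x i < aa n x + sz n) ∨
    (aa n x + sz n ≤ i ∧ FF n x i = aa n x + sz n + BLK (tt n x) (i - aa n x - sz n) ∧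
      aa n x + sz n ≤ FF n x i ∧ FF n x i < n) := by
  obtain ⟨s4, s8, sn, a4, asn, nas4, gs, g5, ht4, xloc⟩ := struct n x hn hx h5
  intro i hi
  unfold FF
  split_ifs with h1 h2
  · refine Or.inl ⟨h1, rfl, ?_⟩
    have := blk_bounds _ ht4 i; omega
  · have := (pat_facts _ s8 s4 _ gs (i - aa n x) (by omega)).1.1
    exact Or.inr (Or.inl ⟨by omega, h2, rfl, by omega, by omega⟩)
  · have := blk_bounds _ ht4 (i - aa n x - sz n)
    exact Or.inr (Or.inr ⟨by omega, rfl, by omega, by omega⟩)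

lemma F_lt (n x : ℕ) (hn : 4 ≤ n) (hx : x < n) (h5 : n = 5 → x ≠ 2) :
    ∀ i < n, FF n x i < n := by
  obtain ⟨s4, s8, sn, a4, asn, nas4, gs, g5, ht4, xloc⟩ := struct n x hn hx h5
  intro i hi
  rcases classify n x hn hx h5 i hi with ⟨_, _, h⟩ | ⟨_, _, _, _, h⟩ | ⟨_, _, _, h⟩ <;> omega

lemma F_ne (n x : ℕ) (hn : 4 ≤ n) (hx : x < n) (h5 : n = 5 → x ≠ 2) :
    ∀ i < n, FF n x i ≠ i := by
  obtain ⟨s4, s8, sn, a4, asn, nas4, gs, g5, ht4, xloc⟩ := struct n x hn hx h5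
  intro i hi
  rcases classify n x hn hx h5 i hi with ⟨h1, he, h⟩ | ⟨h1, h2, he, _, _⟩ | ⟨h1, he, h, h'⟩
  · have := blk_bounds _ ht4 i; omega
  · have := (pat_facts _ s8 s4 _ gs (i - aa n x) (by omega)).1.2; omega
  · have := blk_bounds _ ht4 (i - aa n x - sz n); omega

lemma F_inj (n x : ℕ) (hn : 4 ≤ n) (hx : x < n) (h5 : n = 5 → x ≠ 2) :
    ∀ i < n, ∀ j < n, FF n x i = FF n x j → i = j := by
  obtain ⟨s4, s8, sn, a4, asn, nas4, gs, g5, ht4, xloc⟩ := struct n x hn hx h5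
  intro i hi j hj h
  rcases classify n x hn hx h5 i hi with ⟨hi1, hei, hri⟩ | ⟨hi1, hi2, hei, hri, hri'⟩ |
      ⟨hi1, hei, hri, hri'⟩ <;>
    rcases classify n x hn hx h5 j hj with ⟨hj1, hej, hrj⟩ | ⟨hj1, hj2, hej, hrj, hrj'⟩ |
      ⟨hj1, hej, hrj, hrj'⟩
  · exact blk_inj _ ht4 i j (by omega)
  · omega
  · omega
  · omega
  · have hpe : pat (sz n) (gg n x) (i - aa n x) = pat (sz n) (gg n x) (j - aa n x) := by omega
    have := pat_inj _ s8 s4 _ gs (i - aa n x) (by omega) (j - aa n x) (by omega) hpe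
    omega
  · omega
  · omega
  · omega
  · have := blk_inj _ ht4 (i - aa n x - sz n) (j - aa n x - sz n) (by omega)
    omega

lemma F_edge (n x : ℕ) (hn : 4 ≤ n) (hx : x < n) (h5 : n = 5 → x ≠ 2) :
    ∀ i, i + 1 < n →
      FF n x (i+1) ≠ FF n x i + 1 ∧ FF n x i ≠ FF n x (i+1) + 1 ∧
      FF n x (i+1) ≤ FF n x i + 5 ∧ FF n x i ≤ FF n x (i+1) + 5 := by
  obtain ⟨s4, s8, sn, a4, asn, nas4, gs, g5, ht4, xloc⟩ := struct n x hn hx h5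
  intro i hi1n
  rcases classify n x hn hx h5 i (by omega) with ⟨hi1, hei, hri⟩ |
      ⟨hi1, hi2, hei, hri, hri'⟩ | ⟨hi1, hei, hri, hri'⟩ <;>
    rcases classify n x hn hx h5 (i+1) hi1n with ⟨hj1, hej, hrj⟩ |
      ⟨hj1, hj2, hej, hrj, hrj'⟩ | ⟨hj1, hej, hrj, hrj'⟩
  · have := blk_edge _ ht4 i; omega
  · -- i = aa - 1, boundary region1 -> region2
    have hbi := blk_bounds _ ht4 i
    have hmod : i % 4 = 3 := by omega
    have hp0 := pat_facts _ s8 s4 _ gs 0 (by omega)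
    have := hp0.1.2
    have := hp0.2.2.1 (by omega)
    have he0 : i + 1 - aa n x = 0 := by omega
    rw [he0] at hej
    omega
  · omega
  · omega
  · -- both region2
    have he1 : i + 1 - aa n x = (i - aa n x) + 1 := by omega
    rw [he1] at hej
    have := (pat_facts _ s8 s4 _ gs (i - aa n x) (by omega)).2.1 (by omega)
    omega
  · -- region2 -> region3 boundary
    have hpl := pat_facts _ s8 s4 _ gs (i - aa n x) (by omega)
    have h1 := hpl.1
    have h2 := hpl.2.2.1 (by omega)
    have he0 : i + 1 - aa n x - sz n = 0 := by omega
    rw [he0] at hej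
    have hb0 := blk_bounds _ ht4 0
    omega
  · omega
  · omega
  · have he1 : i + 1 - aa n x - sz n = (i - aa n x - sz n) + 1 := by omega
    rw [he1] at hej
    have := blk_edge _ ht4 (i - aa n x - sz n)
    omega

lemma F_good (n x : ℕ) (hn : 4 ≤ n) (hx : x < n) (h5 : n = 5 → x ≠ 2) :
    FF n x x = x + 1 ∨ x = FF n x x + 1 := by
  obtain ⟨s4, s8, sn, a4, asn, nas4, gs, g5, ht4, xloc⟩ := struct n x hn hx h5
  rcases classify n x hn hx h5 x hx with ⟨hx1, hex, hrx⟩ |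
      ⟨hx1, hx2, hex, hrx, hrx'⟩ | ⟨hx1, hex, hrx, hrx'⟩
  · -- region1 : x < aa, so x % 4 = tt
    have hmod : x % 4 = tt n x := by omega
    have := blk_good _ ht4 x hmod
    omega
  · -- region2 : x = aa + gg
    have hxg : x - aa n x = gg n x := by omega
    rw [hxg] at hex
    have := (pat_facts _ s8 s4 _ gs (gg n x) gs).2.2.2 g5 rfl
    omega
  · -- region3
    have hmod : (x - aa n x - sz n) % 4 = tt n x := by omega
    have := blk_good _ ht4 (x - aa n x - sz n) hmod
    omega

lemma F_disp (n x : ℕ) (hn : 4 ≤ n) (hx : x < n) (h5 : n = 5 → x ≠ 2) :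
    ∀ y < n, (y + 1 = x ∨ y = x + 1 ∨ y = 0 ∨ y + 1 = n) →
      FF n x y ≤ y + 2 ∧ y ≤ FF n x y + 2 := by
  obtain ⟨s4, s8, sn, a4, asn, nas4, gs, g5, ht4, xloc⟩ := struct n x hn hx h5
  intro y hy hcond
  rcases classify n x hn hx h5 y hy with ⟨hy1, hey, hry⟩ |
      ⟨hy1, hy2, hey, hry, hry'⟩ | ⟨hy1, hey, hry, hry'⟩
  · have := blk_bounds _ ht4 y; omega
  · have hd : y - aa n x = 0 ∨ y - aa n x + 1 = sz n ∨ y - aa n x + 1 = gg n x ∨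
        y - aa n x = gg n x ∨ y - aa n x = gg n x + 1 := by omega
    have := (pat_facts _ s8 s4 _ gs (y - aa n x) (by omega)).2.2.1 hd
    omega
  · have := blk_bounds _ ht4 (y - aa n x - sz n); omega

lemma pg_dist_le {n : ℕ} (u v : Fin n) (k : ℕ) (h1 : (u : ℕ) ≤ (v : ℕ) + k)
    (h2 : (v : ℕ) ≤ (u : ℕ) + k) : (pathGraph n).dist u v ≤ k := by
  have : Nonempty (Fin n) := ⟨u⟩
  have hconn : (pathGraph n).Connected := ⟨pathGraph_preconnected n⟩
  have aux : ∀ d : ℕ, ∀ u v : Fin n, (v : ℕ) = (u : ℕ) + d →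
      (pathGraph n).dist u v ≤ d := by
    intro d
    induction d with
    | zero =>
      intro u v h
      have : v = u := Fin.ext (by omega)
      simp [this]
    | succ d ih =>
      intro u v h
      have hu1 : (u : ℕ) + 1 < n := by have := v.isLt; omega
      have hadj : (pathGraph n).Adj u ⟨(u : ℕ) + 1, hu1⟩ := pathGraph_adj.mpr (Or.inl rfl)
      have hd1 : (pathGraph n).dist u ⟨(u : ℕ) + 1, hu1⟩ = 1 :=
        SimpleGraph.dist_eq_one_iff_adj.mpr hadj
      have hd2 := ih ⟨(u : ℕ) + 1, hu1⟩ v (by simp; omega)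
      have := hconn.dist_triangle (u := u) (w := v) (v := ⟨(u : ℕ) + 1, hu1⟩)
      omega
  rcases le_total (u : ℕ) (v : ℕ) with h | h
  · exact (aux ((v : ℕ) - (u : ℕ)) u v (by omega)).trans (by omega)
  · rw [SimpleGraph.dist_comm]
    exact (aux ((u : ℕ) - (v : ℕ)) v u (by omega)).trans (by omega)

end Stmt8Aux

open Stmt8Aux in
/-- for every n ≥ 4 and every vertex x of P_n that is not a bad vertex
(not the middle of P5), there exists a (P_n,x)-good path 2-placement. -/
theorem stmt8 (n : ℕ) (hn : 4 ≤ n) (x : Fin n) (hx : n = 5 → (x : ℕ) ≠ 2) :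
    ∃ σ : Equiv.Perm (Fin n),
      (∀ v, σ v ≠ v) ∧
      (∀ u v, (pathGraph n).Adj u v → ¬ (pathGraph n).Adj (σ u) (σ v)) ∧
      (∀ u v, (pathGraph n).Adj u v → (pathGraph n).dist (σ u) (σ v) ≤ 5) ∧
      (pathGraph n).dist x (σ x) = 1 ∧
      (∀ y, (pathGraph n).Adj x y → (pathGraph n).dist y (σ y) ≤ 2) ∧
      (∀ y, (∃! w, (pathGraph n).Adj y w) → (pathGraph n).dist y (σ y) ≤ 2) := by
  have hxlt : (x : ℕ) < n := x.isLt
  let φ : Fin n → Fin n := fun i => ⟨FF n (x : ℕ) i, F_lt n (x : ℕ) hn hxlt hx i i.isLt⟩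
  have hinj : Function.Injective φ := by
    intro i j h
    exact Fin.ext (F_inj n (x : ℕ) hn hxlt hx i i.isLt j j.isLt (congrArg Fin.val h))
  let σ : Equiv.Perm (Fin n) := Equiv.ofBijective φ (Finite.injective_iff_bijective.mp hinj)
  have hval : ∀ w : Fin n, ((σ w : Fin n) : ℕ) = FF n (x : ℕ) w := fun w => rfl
  refine ⟨σ, ?_, ?_, ?_, ?_, ?_, ?_⟩
  · intro v hc
    exact F_ne n (x : ℕ) hn hxlt hx v v.isLt (congrArg Fin.val hc)
  · intro u v huv hc
    rw [pathGraph_adj] at huv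
    rw [pathGraph_adj, hval u, hval v] at hc
    rcases huv with h | h
    · have he := F_edge n (x : ℕ) hn hxlt hx (u : ℕ) (by omega)
      rw [h] at he; omega
    · have he := F_edge n (x : ℕ) hn hxlt hx (v : ℕ) (by omega)
      rw [h] at he; omega
  · intro u v huv
    rw [pathGraph_adj] at huv
    apply pg_dist_le
    · rw [hval u, hval v]
      rcases huv with h | h
      · have he := F_edge n (x : ℕ) hn hxlt hx (u : ℕ) (by omega); rw [h] at he; omega
      · have he := F_edge n (x : ℕ) hn hxlt hx (v : ℕ) (by omega); rw [h] at he; omega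
    · rw [hval u, hval v]
      rcases huv with h | h
      · have he := F_edge n (x : ℕ) hn hxlt hx (u : ℕ) (by omega); rw [h] at he; omega
      · have he := F_edge n (x : ℕ) hn hxlt hx (v : ℕ) (by omega); rw [h] at he; omega
  · refine SimpleGraph.dist_eq_one_iff_adj.mpr (pathGraph_adj.mpr ?_)
    rw [hval x]
    have := F_good n (x : ℕ) hn hxlt hx
    omega
  · intro y hadj
    rw [pathGraph_adj] at hadj
    have hd := F_disp n (x : ℕ) hn hxlt hx (y : ℕ) y.isLt (by omega)
    apply pg_dist_le <;> rw [hval y] <;> omega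
  · intro y hy
    have hcase : (y : ℕ) = 0 ∨ (y : ℕ) + 1 = n := by
      by_contra hcon
      push_neg at hcon
      have hy0 : 0 < (y : ℕ) := by omega
      have hy1 : (y : ℕ) + 1 < n := by have := y.isLt; omega
      obtain ⟨w, hw, hu⟩ := hy
      have e1 := hu ⟨(y : ℕ) - 1, by omega⟩ (pathGraph_adj.mpr (Or.inr (by simp; omega)))
      have e2 := hu ⟨(y : ℕ) + 1, hy1⟩ (pathGraph_adj.mpr (Or.inl (by simp)))
      have h12 : (y : ℕ) - 1 = (y : ℕ) + 1 := congrArg Fin.val (e1.trans e2.symm)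
      omega
    have hd := F_disp n (x : ℕ) hn hxlt hx (y : ℕ) y.isLt (by omega)
    apply pg_dist_le <;> rw [hval y] <;> omega
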